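/- arXiv:2205.12049 — 5 statements merged into one kernel-verified Lean document; each statement's English description precedes it below -/
import Mathlib

section
/- Let δ > 0, let H_δ : ℝ → ℝ be smooth and monotone with H_δ = 0 on (-∞,-δ], H_δ = 1 on [δ,∞), and |t H_δ'(t)| ≤ δ for all t. For f, g ∈ C¹(C) define f ∧_δ g = H_δ(f−g)·g + (1−H_δ(f−g))·f. If |∇f| ≤ b and |∇g| ≤ b pointwise on C for a function b : C → [0,∞], then |∇(f ∧_δ g)| ≤ (1+2δ)·b pointwise on C, and moreover |f ∧_δ g − min(f,g)| ≤ δ on C. -/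
open Set

noncomputable section

/-- The cube `[-1,1]^n` in `ℝⁿ`. -/
def cube (n : ℕ) : Set (EuclideanSpace ℝ (Fin n)) := {x | ∀ i, x i ∈ Set.Icc (-1 : ℝ) 1}

/-- the smooth approximate minimum
`f ∧_δ g = H_δ(f−g)·g + (1−H_δ(f−g))·f` of two `C¹` functions with gradients bounded by `b`
has gradient bounded by `(1+2δ)·b` on `C` and is within `δ` of `min(f,g)` on `C`. -/
theorem smooth_min_approx {n : ℕ} (δ : ℝ) (hδ : 0 < δ) (H : ℝ → ℝ)
    (hH : ContDiff ℝ (⊤ : ℕ∞) H) (hmono : Monotone H)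
    (h0 : ∀ t : ℝ, t ≤ -δ → H t = 0) (h1 : ∀ t : ℝ, δ ≤ t → H t = 1)
    (hbound : ∀ t : ℝ, |t * deriv H t| ≤ δ)
    (f g : EuclideanSpace ℝ (Fin n) → ℝ) (hf : ContDiff ℝ 1 f) (hg : ContDiff ℝ 1 g)
    (b : EuclideanSpace ℝ (Fin n) → ℝ)
    (hfb : ∀ x ∈ cube n, ‖fderiv ℝ f x‖ ≤ b x) (hgb : ∀ x ∈ cube n, ‖fderiv ℝ g x‖ ≤ b x) :
    (∀ x ∈ cube n,
        ‖fderiv ℝ (fun z => H (f z - g z) * g z + (1 - H (f z - g z)) * f z) x‖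
          ≤ (1 + 2 * δ) * b x) ∧
      ∀ x ∈ cube n,
        |(H (f x - g x) * g x + (1 - H (f x - g x)) * f x) - min (f x) (g x)| ≤ δ := by
  have hHd : Differentiable ℝ H := (hH.of_le (by simp) : ContDiff ℝ 1 H).differentiable one_ne_zero
  have hfd : Differentiable ℝ f := hf.differentiable one_ne_zero
  have hgd : Differentiable ℝ g := hg.differentiable one_ne_zero
  have hH0 : ∀ t, 0 ≤ H t := by
    intro t
    rcases le_total t (-δ) with h | h
    · rw [h0 t h]
    · calc (0:ℝ) = H (-δ) := (h0 _ le_rfl).symm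
        _ ≤ H t := hmono h
  have hH1 : ∀ t, H t ≤ 1 := by
    intro t
    rcases le_total δ t with h | h
    · rw [h1 t h]
    · calc H t ≤ H δ := hmono h
        _ = 1 := h1 _ le_rfl
  constructor
  · intro x hx
    have hb0 : 0 ≤ b x := le_trans (norm_nonneg _) (hfb x hx)
    have hud : HasFDerivAt (fun z => f z - g z) (fderiv ℝ f x - fderiv ℝ g x) x :=
      (hfd x).hasFDerivAt.sub (hgd x).hasFDerivAt
    have hφ : HasFDerivAt (fun z => H (f z - g z))
        (deriv H (f x - g x) • (fderiv ℝ f x - fderiv ℝ g x)) x :=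
      (hHd (f x - g x)).hasDerivAt.comp_hasFDerivAt x hud
    have hF : HasFDerivAt (fun z => H (f z - g z) * g z + (1 - H (f z - g z)) * f z)
        (H (f x - g x) • fderiv ℝ g x + (1 - H (f x - g x)) • fderiv ℝ f x +
          ((g x - f x) * deriv H (f x - g x)) • (fderiv ℝ f x - fderiv ℝ g x)) x := by
      have h := (hφ.fun_mul (hgd x).hasFDerivAt).fun_add
        (((hasFDerivAt_const (1:ℝ) x).fun_sub hφ).fun_mul (hfd x).hasFDerivAt)
      refine h.congr_fderiv ?_
      ext y
      simp only [ContinuousLinearMap.add_apply, ContinuousLinearMap.smul_apply,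
        ContinuousLinearMap.sub_apply, ContinuousLinearMap.zero_apply, smul_eq_mul,
        ContinuousLinearMap.coe_smul', Pi.smul_apply, zero_sub, ContinuousLinearMap.neg_apply]
      ring
    rw [hF.fderiv]
    have hc : |(g x - f x) * deriv H (f x - g x)| ≤ δ := by
      have := hbound (f x - g x)
      calc |(g x - f x) * deriv H (f x - g x)|
          = |(f x - g x) * deriv H (f x - g x)| := by rw [← abs_neg]; ring_nf
        _ ≤ δ := this
    have hA : ‖H (f x - g x) • fderiv ℝ g x + (1 - H (f x - g x)) • fderiv ℝ f x‖ ≤ b x := by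
      have h01 := hH0 (f x - g x)
      have h11 := hH1 (f x - g x)
      calc ‖H (f x - g x) • fderiv ℝ g x + (1 - H (f x - g x)) • fderiv ℝ f x‖
          ≤ ‖H (f x - g x) • fderiv ℝ g x‖ + ‖(1 - H (f x - g x)) • fderiv ℝ f x‖ :=
            norm_add_le _ _
        _ = |H (f x - g x)| * ‖fderiv ℝ g x‖ + |1 - H (f x - g x)| * ‖fderiv ℝ f x‖ := by
            rw [norm_smul, norm_smul]; rfl
        _ = H (f x - g x) * ‖fderiv ℝ g x‖ + (1 - H (f x - g x)) * ‖fderiv ℝ f x‖ := by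
            rw [abs_of_nonneg h01, abs_of_nonneg (by linarith)]
        _ ≤ H (f x - g x) * b x + (1 - H (f x - g x)) * b x := by
            have := hfb x hx; have := hgb x hx
            gcongr <;> linarith
        _ = b x := by ring
    have hB : ‖((g x - f x) * deriv H (f x - g x)) • (fderiv ℝ f x - fderiv ℝ g x)‖
        ≤ δ * (2 * b x) := by
      rw [norm_smul]
      have h2 : ‖fderiv ℝ f x - fderiv ℝ g x‖ ≤ 2 * b x := by
        calc ‖fderiv ℝ f x - fderiv ℝ g x‖ ≤ ‖fderiv ℝ f x‖ + ‖fderiv ℝ g x‖ := norm_sub_le _ _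
          _ ≤ 2 * b x := by have := hfb x hx; have := hgb x hx; linarith
      exact mul_le_mul hc h2 (norm_nonneg _) hδ.le
    refine (norm_add_le _ _).trans ?_
    nlinarith [hA, hB]
  · intro x _
    have h01 := hH0 (f x - g x)
    have h11 := hH1 (f x - g x)
    rcases le_total (f x) (g x) with hle | hle
    · rw [min_eq_left hle]
      rcases le_total (f x - g x) (-δ) with h | h
      · rw [h0 _ h]; simp; linarith [abs_nonneg (0:ℝ)]
      · rw [abs_le]; constructor <;> nlinarith
    · rw [min_eq_right hle]
      rcases le_total δ (f x - g x) with h | h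
      · rw [h1 _ h]; simp; linarith
      · rw [abs_le]; constructor <;> nlinarith
end
end

section
/- Let (Ω, A, μ) be a σ-finite measure space with μ(Ω) < ∞, let τ : [0,∞) → [0,∞) be concave nondecreasing with τ(0)=0 and τ'(0) = lim_{m↓0} τ(m)/m < ∞, let ε(v) = sup_{m≥0}(τ(m) − vm), and let h : Ω → [0,∞) be integrable. Then ∫_Ω τ(h) dμ = inf over measurable bounded functions b : Ω → [0, τ'(0)] of ∫_Ω b·h dμ + ∫_Ω ε(b) dμ. -/
open MeasureTheory Set Filter Topology ENNReal

noncomputable section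

/-- The maintenance cost `ε(v) = sup_{m ≥ 0} (τ(m) − v·m)`, valued in `[0,∞]`. -/
def maintenanceCost (τ : ℝ → ℝ) (v : ℝ) : ℝ≥0∞ :=
  ⨆ m ∈ Set.Ici (0 : ℝ), ENNReal.ofReal (τ m - v * m)

/-- The "right derivative" supergradient selection: `sSup` of slopes to the right. -/
def superGrad (τ : ℝ → ℝ) (m : ℝ) : ℝ :=
  sSup ((fun m' => (τ m' - τ (max m 0)) / (m' - max m 0)) '' Set.Ioi (max m 0))

/-- interchange of infimum and integral. For a finite measure space, a
transportation cost `τ` with `τ'(0) = L < ∞`, and an integrable nonnegative `h`,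
`∫ τ(h) dμ = inf_b ∫ b·h dμ + ∫ ε(b) dμ`, the infimum over measurable `b : Ω → [0,L]`. -/
theorem lintegral_transport_cost_eq_inf {Ω : Type*} [MeasurableSpace Ω]
    (μ : Measure Ω) [SigmaFinite μ] [IsFiniteMeasure μ]
    (τ : ℝ → ℝ) (hmono : MonotoneOn τ (Set.Ici 0)) (hconc : ConcaveOn ℝ (Set.Ici 0) τ)
    (h0 : τ 0 = 0)
    (L : ℝ) (hL0 : 0 ≤ L)
    (hL : Filter.Tendsto (fun m => τ m / m) (nhdsWithin 0 (Set.Ioi 0)) (nhds L))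
    (h : Ω → ℝ) (hmeas : Measurable h) (hnn : ∀ ω, 0 ≤ h ω) (hint : Integrable h μ) :
    (∫⁻ ω, ENNReal.ofReal (τ (h ω)) ∂μ) =
      ⨅ b ∈ {b : Ω → ℝ | Measurable b ∧ ∀ ω, b ω ∈ Set.Icc 0 L},
        ((∫⁻ ω, ENNReal.ofReal (b ω * h ω) ∂μ) + ∫⁻ ω, maintenanceCost τ (b ω) ∂μ) := by
  -- secant antitonicity for the concave function τ
  have secant : ∀ {a x y : ℝ}, a ∈ Set.Ici (0:ℝ) → x ∈ Set.Ici (0:ℝ) → y ∈ Set.Ici (0:ℝ) →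
      x ≠ a → y ≠ a → x ≤ y →
      (τ y - τ a) / (y - a) ≤ (τ x - τ a) / (x - a) := by
    intro a x y ha hx hy hxa hya hxy
    have H := hconc.neg.secant_mono ha hx hy hxa hya hxy
    simp only [Pi.neg_apply] at H
    rw [show -τ x - -τ a = -(τ x - τ a) by ring, show -τ y - -τ a = -(τ y - τ a) by ring,
      neg_div, neg_div, neg_le_neg_iff] at H
    exact H
  have hτnn : ∀ m, 0 ≤ m → 0 ≤ τ m := fun m hm => by
    have := hmono (Set.mem_Ici.2 le_rfl) hm hm
    linarith [h0 ▸ this]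
  -- the slope bound: τ m / m ≤ L for m > 0
  have hslopeL : ∀ m : ℝ, 0 < m → τ m / m ≤ L := by
    intro m hm
    refine ge_of_tendsto hL ?_
    filter_upwards [self_mem_nhdsWithin, Ioo_mem_nhdsGT_of_mem ⟨le_rfl, hm⟩] with m' hm' hm''
    have hm'0 : (0:ℝ) < m' := hm'
    have := secant (Set.mem_Ici.2 le_rfl) (Set.mem_Ici.2 hm'0.le) (Set.mem_Ici.2 hm.le)
      (ne_of_gt hm'0) (ne_of_gt hm) (le_of_lt hm''.2)
    simpa [h0] using this
  -- every slope from a point m ≥ 0 to the right is in [0, L] bound above by L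
  have hslope_le_L : ∀ m : ℝ, 0 ≤ m → ∀ m' ∈ Set.Ioi m, (τ m' - τ m) / (m' - m) ≤ L := by
    intro m hm m' hm'
    have hm'0 : 0 < m' := lt_of_le_of_lt hm hm'
    have h1 : (τ m - τ m') / (m - m') ≤ (τ 0 - τ m') / (0 - m') := by
      refine secant (Set.mem_Ici.2 hm'0.le) (Set.mem_Ici.2 le_rfl) (Set.mem_Ici.2 hm) ?_ ?_ hm
      · exact ne_of_lt hm'0
      · exact ne_of_lt hm'
    have h2 : (τ 0 - τ m') / (0 - m') = τ m' / m' := by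
      rw [h0, zero_sub, zero_sub, neg_div_neg_eq]
    have h3 : (τ m - τ m') / (m - m') = (τ m' - τ m) / (m' - m) := by
      rw [← neg_div_neg_eq]; ring_nf
    calc (τ m' - τ m) / (m' - m) = (τ m - τ m') / (m - m') := h3.symm
      _ ≤ τ m' / m' := h2 ▸ h1
      _ ≤ L := hslopeL m' hm'0
  -- properties of superGrad
  set D := superGrad τ with hD
  have hDval : ∀ m : ℝ, 0 ≤ m →
      D m = sSup ((fun m' => (τ m' - τ m) / (m' - m)) '' Set.Ioi m) := by
    intro m hm; rw [hD, superGrad, max_eq_left hm]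
  have hne : ∀ m : ℝ, ((fun m' => (τ m' - τ m) / (m' - m)) '' Set.Ioi m).Nonempty :=
    fun m => ⟨_, ⟨m + 1, by simp, rfl⟩⟩
  have hbdd : ∀ m : ℝ, 0 ≤ m → ∀ z ∈ (fun m' => (τ m' - τ m) / (m' - m)) '' Set.Ioi m, z ≤ L := by
    rintro m hm z ⟨m', hm', rfl⟩; exact hslope_le_L m hm m' hm'
  have hbddA : ∀ m : ℝ, 0 ≤ m → BddAbove ((fun m' => (τ m' - τ m) / (m' - m)) '' Set.Ioi m) :=
    fun m hm => ⟨L, fun z hz => hbdd m hm z hz⟩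
  have hDleL : ∀ m : ℝ, 0 ≤ m → D m ≤ L := by
    intro m hm; rw [hDval m hm]; exact csSup_le (hne m) (hbdd m hm)
  have hDnn : ∀ m : ℝ, 0 ≤ m → 0 ≤ D m := by
    intro m hm
    rw [hDval m hm]
    refine le_csSup_of_le (hbddA m hm) ⟨m + 1, by simp, rfl⟩ ?_
    have h1 : τ m ≤ τ (m + 1) := hmono (Set.mem_Ici.2 hm)
      (Set.mem_Ici.2 (by linarith : (0:ℝ) ≤ m + 1)) (by linarith)
    exact div_nonneg (by linarith) (by linarith)
  -- supergradient property
  have hsg : ∀ m : ℝ, 0 ≤ m → ∀ m' : ℝ, 0 ≤ m' → τ m' ≤ τ m + D m * (m' - m) := by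
    intro m hm m' hm'
    rcases lt_trichotomy m' m with hlt | rfl | hgt
    · -- m' < m : D m ≤ slope(m', m)
      have key : D m ≤ (τ m' - τ m) / (m' - m) := by
        rw [hDval m hm]
        refine csSup_le (hne m) ?_
        rintro z ⟨m'', hm'', rfl⟩
        have hm''m : m < m'' := hm''
        exact secant (Set.mem_Ici.2 hm) (Set.mem_Ici.2 hm')
          (Set.mem_Ici.2 (le_trans hm hm''m.le))
          (ne_of_lt hlt) (ne_of_gt hm''m) (le_of_lt (lt_trans hlt hm''m))
      have hneg : m' - m < 0 := by linarith
      have h2 := (le_div_iff_of_neg hneg).mp key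
      linarith
    · simp
    · have key : (τ m' - τ m) / (m' - m) ≤ D m := by
        rw [hDval m hm]
        exact le_csSup (hbddA m hm) ⟨m', hgt, rfl⟩
      have hgt' : m < m' := hgt
      have hpos : 0 < m' - m := by linarith
      have h2 := (div_le_iff₀ hpos).mp key
      linarith
  -- antitonicity of D
  have hDant : Antitone D := by
    intro m₁ m₂ h12
    set a := max m₁ 0 with ha
    set c := max m₂ 0 with hc
    have ha0 : 0 ≤ a := le_max_right _ _
    have hc0 : 0 ≤ c := le_max_right _ _
    have hac : a ≤ c := max_le_max h12 le_rfl
    rw [hD, superGrad, superGrad, ← ha, ← hc]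
    rcases eq_or_lt_of_le hac with heq | hlt
    · rw [heq]
    refine csSup_le (hne c) ?_
    rintro z ⟨m', hm', rfl⟩
    have hcm' : c < m' := hm'
    have ham' : a < m' := lt_trans hlt hcm'
    have step : (τ m' - τ c) / (m' - c) ≤ (τ m' - τ a) / (m' - a) := by
      have := secant (a := m') (Set.mem_Ici.2 (le_trans hc0 hcm'.le)) ha0 hc0
        (ne_of_lt ham') (ne_of_lt hcm') hac
      have e1 : (τ c - τ m') / (c - m') = (τ m' - τ c) / (m' - c) := by
        rw [← neg_div_neg_eq]; ring_nf
      have e2 : (τ a - τ m') / (a - m') = (τ m' - τ a) / (m' - a) := by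
        rw [← neg_div_neg_eq]; ring_nf
      rw [e1, e2] at this; exact this
    exact le_trans step (le_csSup (hbddA a ha0) ⟨m', ham', rfl⟩)
  have hDmeas : Measurable D := hDant.measurable
  -- maintenance cost at the supergradient
  have hmc : ∀ m : ℝ, 0 ≤ m → maintenanceCost τ (D m) = ENNReal.ofReal (τ m - D m * m) := by
    intro m hm
    apply le_antisymm
    · refine iSup₂_le fun m' hm' => ?_
      refine ENNReal.ofReal_le_ofReal ?_
      have := hsg m hm m' hm'
      nlinarith [this]
    · exact le_iSup₂_of_le m hm le_rfl
  have hmcnn : ∀ m : ℝ, 0 ≤ m → 0 ≤ τ m - D m * m := by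
    intro m hm
    have := hsg m hm 0 le_rfl
    rw [h0] at this; nlinarith
  -- the chosen competitor
  set b₀ : Ω → ℝ := fun ω => D (h ω) with hb₀
  have hb₀meas : Measurable b₀ := hDmeas.comp hmeas
  have hb₀mem : ∀ ω, b₀ ω ∈ Set.Icc 0 L := fun ω => ⟨hDnn _ (hnn ω), hDleL _ (hnn ω)⟩
  -- pointwise identity for b₀
  have hpt : ∀ ω, ENNReal.ofReal (b₀ ω * h ω) + maintenanceCost τ (b₀ ω)
      = ENNReal.ofReal (τ (h ω)) := by
    intro ω
    simp only [hb₀]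
    rw [hmc _ (hnn ω), ← ENNReal.ofReal_add (mul_nonneg (hDnn _ (hnn ω)) (hnn ω))
      (hmcnn _ (hnn ω))]
    congr 1
    ring
  apply le_antisymm
  · -- LHS ≤ inf
    refine le_iInf₂ fun b hbmem => ?_
    obtain ⟨hbmeas, hbmemIcc⟩ := hbmem
    have hptle : ∀ ω, ENNReal.ofReal (τ (h ω)) ≤
        ENNReal.ofReal (b ω * h ω) + maintenanceCost τ (b ω) := by
      intro ω
      have h1 : ENNReal.ofReal (τ (h ω) - b ω * h ω) ≤ maintenanceCost τ (b ω) :=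
        le_iSup₂_of_le (h ω) (hnn ω) le_rfl
      calc ENNReal.ofReal (τ (h ω))
          = ENNReal.ofReal (b ω * h ω + (τ (h ω) - b ω * h ω)) := by congr 1; ring
        _ ≤ ENNReal.ofReal (b ω * h ω) + ENNReal.ofReal (τ (h ω) - b ω * h ω) :=
            ENNReal.ofReal_add_le
        _ ≤ _ := add_le_add le_rfl h1
    calc (∫⁻ ω, ENNReal.ofReal (τ (h ω)) ∂μ)
        ≤ ∫⁻ ω, (ENNReal.ofReal (b ω * h ω) + maintenanceCost τ (b ω)) ∂μ :=
          lintegral_mono hptle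
      _ = (∫⁻ ω, ENNReal.ofReal (b ω * h ω) ∂μ) + ∫⁻ ω, maintenanceCost τ (b ω) ∂μ :=
          lintegral_add_left ((hbmeas.mul hmeas).ennreal_ofReal) _
  · -- inf ≤ LHS, via the competitor b₀
    refine iInf₂_le_of_le b₀ ⟨hb₀meas, hb₀mem⟩ ?_
    rw [← lintegral_add_left (f := fun ω => ENNReal.ofReal (b₀ ω * h ω)) ((hb₀meas.mul hmeas).ennreal_ofReal)]
    exact le_of_eq (lintegral_congr fun ω => hpt ω)
end
end

section
/- Let S be a countably 1-rectifiable, H¹-measurable subset of C = [-1,1]^n, ξ : S → ℝⁿ integrable with respect to H¹⌊S, and τ a transportation cost with τ'(0) < ∞ and maintenance cost ε(v) = sup_{m≥0}(τ(m)−vm). Then ∫_S τ(|ξ|) dH¹ = inf over lower semicontinuous functions b : S → [0, τ'(0)] of ∫_S b|ξ| dH¹ + ∫_S ε(b) dH¹. -/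
open MeasureTheory Set Filter Topology ENNReal
open scoped NNReal

noncomputable section

/-- A countably 1-rectifiable set: countable union of Lipschitz images of subsets of `ℝ`. -/
def CountablyOneRectifiable {n : ℕ} (S : Set (EuclideanSpace ℝ (Fin n))) : Prop :=
  ∃ f : ℕ → ℝ → EuclideanSpace ℝ (Fin n),
    (∀ i, ∃ K : NNReal, LipschitzWith K (f i)) ∧ S ⊆ ⋃ i, Set.range (f i)

namespace NetworkDual

variable {τ : ℝ → ℝ} {L : ℝ}

/-- Three point inequality for concave functions, division free. -/
lemma three_point (hconc : ConcaveOn ℝ (Set.Ici 0) τ) {a b c : ℝ}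
    (ha : 0 ≤ a) (hab : a ≤ b) (hbc : b ≤ c) (hac : a < c) :
    (c - b) * τ a + (b - a) * τ c ≤ (c - a) * τ b := by
  have hca : (0:ℝ) < c - a := by linarith
  have h1 : (0:ℝ) ≤ (c - b) / (c - a) := div_nonneg (by linarith) hca.le
  have h2 : (0:ℝ) ≤ (b - a) / (c - a) := div_nonneg (by linarith) hca.le
  have h3 : (c - b) / (c - a) + (b - a) / (c - a) = 1 := by field_simp; ring
  have key := hconc.2 (Set.mem_Ici.2 ha) (Set.mem_Ici.2 (ha.trans (hab.trans hbc))) h1 h2 h3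
  rw [smul_eq_mul, smul_eq_mul, smul_eq_mul, smul_eq_mul] at key
  have hb : ((c - b) / (c - a)) * a + ((b - a) / (c - a)) * c = b := by
    field_simp; ring
  rw [hb] at key
  have := mul_le_mul_of_nonneg_right key hca.le
  calc (c - b) * τ a + (b - a) * τ c
      = ((c - b) / (c - a) * τ a + (b - a) / (c - a) * τ c) * (c - a) := by
        field_simp
    _ ≤ τ b * (c - a) := this
    _ = (c - a) * τ b := mul_comm _ _

lemma tau_nonneg (hmono : MonotoneOn τ (Set.Ici 0)) (h0 : τ 0 = 0) {m : ℝ} (hm : 0 ≤ m) :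
    0 ≤ τ m := by
  have := hmono (Set.mem_Ici.2 le_rfl) (Set.mem_Ici.2 hm) hm
  linarith [h0 ▸ this]

lemma tau_scale (hconc : ConcaveOn ℝ (Set.Ici 0) τ) (h0 : τ 0 = 0) {m lam : ℝ}
    (hm : 0 ≤ m) (hlam : 1 ≤ lam) : τ (lam * m) ≤ lam * τ m := by
  rcases eq_or_lt_of_le hm with rfl | hm'
  · simp [h0]
  rcases eq_or_lt_of_le hlam with rfl | hlam'
  · simp
  have key := three_point hconc (a := 0) (b := m) (c := lam * m) le_rfl hm'.le
    (by nlinarith) (by nlinarith)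
  rw [h0] at key
  have hml : (0:ℝ) < m := hm'
  nlinarith

lemma tau_le_L (hconc : ConcaveOn ℝ (Set.Ici 0) τ) (h0 : τ 0 = 0)
    (hL : Filter.Tendsto (fun m => τ m / m) (nhdsWithin 0 (Set.Ioi 0)) (nhds L)) :
    ∀ m, 0 ≤ m → τ m ≤ L * m := by
  intro m hm
  rcases eq_or_lt_of_le hm with rfl | hm'
  · simp [h0]
  have key : τ m / m ≤ L := by
    refine ge_of_tendsto hL ?_
    filter_upwards [Ioo_mem_nhdsGT_of_mem (Set.mem_Ico.2 ⟨le_rfl, hm'⟩)] with x hx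
    have h3 := three_point hconc (a := 0) (b := x) (c := m) le_rfl hx.1.le hx.2.le hm'
    rw [h0] at h3
    rw [div_le_div_iff₀ hm' hx.1]
    nlinarith
  calc τ m = (τ m / m) * m := by field_simp
    _ ≤ L * m := mul_le_mul_of_nonneg_right key hm

/-- Approximate supergradient slope of `τ`. -/
def betaFn (τ : ℝ → ℝ) (L t m : ℝ) : ℝ :=
  if m ≤ 0 then L else (τ ((1 + t) * m) - τ m) / (t * m)

variable {t : ℝ}

lemma beta_nonneg (hmono : MonotoneOn τ (Set.Ici 0)) (hL0 : 0 ≤ L) (ht : 0 < t) (m : ℝ) :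
    0 ≤ betaFn τ L t m := by
  unfold betaFn
  split_ifs with hc
  · exact hL0
  · push_neg at hc
    refine div_nonneg (sub_nonneg.2 (hmono (Set.mem_Ici.2 hc.le)
      (Set.mem_Ici.2 (by nlinarith)) (by nlinarith))) (by positivity)

lemma beta_le_L (hconc : ConcaveOn ℝ (Set.Ici 0) τ) (h0 : τ 0 = 0)
    (htL : ∀ m, 0 ≤ m → τ m ≤ L * m) (ht : 0 < t) (m : ℝ) :
    betaFn τ L t m ≤ L := by
  unfold betaFn
  split_ifs with hc
  · exact le_rfl
  · push_neg at hc
    rw [div_le_iff₀ (by positivity)]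
    have h1 : τ ((1 + t) * m) ≤ (1 + t) * τ m := tau_scale hconc h0 hc.le (by linarith)
    have h2 : τ m ≤ L * m := htL m hc.le
    nlinarith

lemma beta_mul_le (hconc : ConcaveOn ℝ (Set.Ici 0) τ) (h0 : τ 0 = 0) (ht : 0 < t)
    {m : ℝ} (hm : 0 ≤ m) : betaFn τ L t m * m ≤ τ m := by
  unfold betaFn
  split_ifs with hc
  · have : m = 0 := le_antisymm hc hm
    subst this; simp [h0]
  · push_neg at hc
    have h1 : τ ((1 + t) * m) ≤ (1 + t) * τ m := tau_scale hconc h0 hc.le (by linarith)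
    rw [div_mul_eq_mul_div, div_le_iff₀ (by positivity)]
    nlinarith

lemma beta_key (hmono : MonotoneOn τ (Set.Ici 0)) (hconc : ConcaveOn ℝ (Set.Ici 0) τ)
    (h0 : τ 0 = 0) (htL : ∀ m, 0 ≤ m → τ m ≤ L * m) (ht : 0 < t) {m : ℝ} (hm : 0 ≤ m) :
    ∀ m', 0 ≤ m' →
      τ m' ≤ τ m + betaFn τ L t m * (m' - m) + betaFn τ L t m * (t * m) := by
  intro m' hm'
  unfold betaFn
  split_ifs with hc
  · have hm0 : m = 0 := le_antisymm hc hm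
    subst hm0
    have := htL m' hm'
    rw [h0]
    linarith
  · push_neg at hc
    have hd : (0:ℝ) < t * m := by positivity
    set v := (τ ((1 + t) * m) - τ m) / (t * m) with hvdef
    have hvd : v * (t * m) = τ ((1 + t) * m) - τ m := div_mul_cancel₀ _ hd.ne'
    have hMm : (1 + t) * m - m = t * m := by ring
    have hmM : m < (1 + t) * m := by nlinarith
    have hv0 : 0 ≤ v := div_nonneg (sub_nonneg.2 (hmono (Set.mem_Ici.2 hc.le)
      (Set.mem_Ici.2 (by nlinarith)) hmM.le)) hd.le
    rcases lt_trichotomy m' m with h1 | h1 | h1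
    · have h3 := three_point hconc hm' h1.le hmM.le (h1.trans hmM)
      have key : (t * m) * τ m' ≤ (t * m) * (τ m + v * (m' - m) + v * (t * m)) := by
        nlinarith [mul_nonneg (mul_nonneg hv0 hd.le) hd.le]
      exact le_of_mul_le_mul_left key hd
    · subst h1
      nlinarith [mul_nonneg hv0 hd.le]
    · rcases le_or_gt ((1 + t) * m) m' with h2 | h2
      · rcases h2.eq_or_lt with h2' | h2'
        · rw [← h2']
          nlinarith [mul_nonneg hv0 hd.le]
        · have h3 := three_point hconc hm hmM.le h2'.le (hmM.trans h2')
          have key : (t * m) * τ m' ≤ (t * m) * (τ m + v * (m' - m) + v * (t * m)) := by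
            nlinarith [mul_nonneg (mul_nonneg hv0 hd.le) hd.le]
          exact le_of_mul_le_mul_left key hd
      · have hmon := hmono (Set.mem_Ici.2 hm') (Set.mem_Ici.2 (by nlinarith)) h2.le
        nlinarith [mul_nonneg hv0 (by linarith : (0:ℝ) ≤ m' - m)]

lemma beta_measurable (hmono : MonotoneOn τ (Set.Ici 0)) (ht : 0 < t) :
    Measurable (betaFn τ L t) := by
  have hmax : Monotone fun x : ℝ => τ (max x 0) := fun x y hxy =>
    hmono (Set.mem_Ici.2 (le_max_right _ _)) (Set.mem_Ici.2 (le_max_right _ _))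
      (max_le_max hxy le_rfl)
  have hmeas : Measurable fun x : ℝ => τ (max x 0) := hmax.measurable
  have heq : betaFn τ L t = fun m =>
      if m ≤ 0 then L else (τ (max ((1 + t) * m) 0) - τ (max m 0)) / (t * m) := by
    funext m
    unfold betaFn
    split_ifs with hc
    · rfl
    · push_neg at hc
      rw [max_eq_left (by nlinarith), max_eq_left hc.le]
  rw [heq]
  exact Measurable.ite (measurableSet_le measurable_id measurable_const) measurable_const
    (((hmeas.comp (measurable_id.const_mul (1 + t))).sub hmeas).div
      (measurable_id.const_mul t))

lemma maint_anti : Antitone (maintenanceCost τ) := by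
  intro v w hvw
  refine iSup₂_le fun m hm => ?_
  refine le_trans (ENNReal.ofReal_le_ofReal ?_)
    (le_iSup₂ (f := fun m (_ : m ∈ Set.Ici (0:ℝ)) => ENNReal.ofReal (τ m - v * m)) m hm)
  have : v * m ≤ w * m := mul_le_mul_of_nonneg_right hvw hm
  linarith

lemma pointwise_lower (τ : ℝ → ℝ) (b : ℝ) {m : ℝ} (hm : 0 ≤ m) :
    ENNReal.ofReal (τ m) ≤ ENNReal.ofReal (b * m) + maintenanceCost τ b := by
  have h1 : b * m + (τ m - b * m) = τ m := by ring
  calc ENNReal.ofReal (τ m) = ENNReal.ofReal (b * m + (τ m - b * m)) := by rw [h1]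
    _ ≤ ENNReal.ofReal (b * m) + ENNReal.ofReal (τ m - b * m) := ENNReal.ofReal_add_le
    _ ≤ ENNReal.ofReal (b * m) + maintenanceCost τ b :=
        add_le_add_right
          (le_iSup₂ (f := fun m (_ : m ∈ Set.Ici (0:ℝ)) => ENNReal.ofReal (τ m - b * m)) m hm) _

lemma eps_bound (hmono : MonotoneOn τ (Set.Ici 0)) (hconc : ConcaveOn ℝ (Set.Ici 0) τ)
    (h0 : τ 0 = 0) (htL : ∀ m, 0 ≤ m → τ m ≤ L * m) (ht : 0 < t) {m : ℝ} (hm : 0 ≤ m) :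
    maintenanceCost τ (betaFn τ L t m) ≤
      ENNReal.ofReal (τ m - betaFn τ L t m * m + betaFn τ L t m * (t * m)) := by
  refine iSup₂_le fun m' hm' => ENNReal.ofReal_le_ofReal ?_
  have := beta_key hmono hconc h0 htL ht hm m' hm'
  linarith

lemma combined (hmono : MonotoneOn τ (Set.Ici 0)) (hconc : ConcaveOn ℝ (Set.Ici 0) τ)
    (h0 : τ 0 = 0) (hL0 : 0 ≤ L) (htL : ∀ m, 0 ≤ m → τ m ≤ L * m) (ht : 0 < t)
    {m : ℝ} (hm : 0 ≤ m) :
    ENNReal.ofReal (betaFn τ L t m * m) + maintenanceCost τ (betaFn τ L t m) ≤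
      ENNReal.ofReal (τ m) + ENNReal.ofReal (L * t) * ENNReal.ofReal m := by
  have hb0 : 0 ≤ betaFn τ L t m := beta_nonneg hmono hL0 ht m
  have hbL : betaFn τ L t m ≤ L := beta_le_L hconc h0 htL ht m
  have hbm : betaFn τ L t m * m ≤ τ m := beta_mul_le hconc h0 ht hm
  calc ENNReal.ofReal (betaFn τ L t m * m) + maintenanceCost τ (betaFn τ L t m)
      ≤ ENNReal.ofReal (betaFn τ L t m * m) +
          (ENNReal.ofReal (τ m - betaFn τ L t m * m) +
            ENNReal.ofReal (betaFn τ L t m * (t * m))) := by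
        refine add_le_add_right (le_trans (eps_bound hmono hconc h0 htL ht hm) ?_) _
        exact ENNReal.ofReal_add_le
    _ = ENNReal.ofReal (τ m) + ENNReal.ofReal (betaFn τ L t m * (t * m)) := by
        rw [← add_assoc, ← ENNReal.ofReal_add (mul_nonneg hb0 hm) (by linarith)]
        congr 1
        ring
    _ ≤ ENNReal.ofReal (τ m) + ENNReal.ofReal (L * t) * ENNReal.ofReal m := by
        refine add_le_add_right ?_ _
        rw [← ENNReal.ofReal_mul (mul_nonneg hL0 ht.le)]
        refine ENNReal.ofReal_le_ofReal ?_
        nlinarith [mul_nonneg (mul_nonneg (sub_nonneg.2 hbL) ht.le) hm]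

lemma lscOn_aemeasurable {α : Type*} [TopologicalSpace α] [MeasurableSpace α]
    [OpensMeasurableSpace α] {S : Set α} (hS : MeasurableSet S) {b : α → ℝ}
    (hb : LowerSemicontinuousOn b S) (μ : Measure α) :
    AEMeasurable b (μ.restrict S) := by
  classical
  have hlsc : LowerSemicontinuous (S.restrict b) := by
    intro x y hy
    have h1 := hb x.1 x.2 y hy
    rw [← map_nhds_subtype_val x] at h1
    exact eventually_map.1 h1
  have hmeas : Measurable (S.restrict b) := hlsc.measurable
  refine ⟨fun x => if hx : x ∈ S then b x else 0, ?_, ?_⟩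
  · exact Measurable.dite (f := S.restrict b) hmeas
      (g := fun _ : (Sᶜ : Set α) => (0:ℝ)) measurable_const hS
  · exact (ae_restrict_iff' hS).2 (Filter.Eventually.of_forall fun x hx => by simp [hx])

lemma lsc_toReal_min {α : Type*} [TopologicalSpace α] {g : α → ℝ≥0∞}
    (hg : LowerSemicontinuous g) (L : ℝ) :
    LowerSemicontinuous fun x => (min (ENNReal.ofReal L) (g x)).toReal := by
  intro x y hy
  rcases lt_or_ge y 0 with hy0 | hy0
  · exact Filter.Eventually.of_forall fun z => lt_of_lt_of_le hy0 ENNReal.toReal_nonneg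
  · have hne : ∀ z, min (ENNReal.ofReal L) (g z) ≠ ∞ := fun z =>
      ne_top_of_le_ne_top ENNReal.ofReal_ne_top (min_le_left _ _)
    have h1 : ENNReal.ofReal y < min (ENNReal.ofReal L) (g x) :=
      (ENNReal.ofReal_lt_iff_lt_toReal hy0 (hne x)).2 hy
    have h2 : ENNReal.ofReal y < g x := h1.trans_le (min_le_right _ _)
    filter_upwards [hg x _ h2] with z hz
    exact (ENNReal.ofReal_lt_iff_lt_toReal hy0 (hne z)).1
      (lt_min (h1.trans_le (min_le_left _ _)) hz)

end NetworkDual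

open NetworkDual

/-- dual formula for the total network transportation cost. For a countably
1-rectifiable measurable `S ⊆ C`, `ξ ∈ L¹(H¹⌊S;ℝⁿ)`, and a transportation cost `τ` with
`τ'(0) = L < ∞`, `∫_S τ(|ξ|) dH¹ = inf_b ∫_S b|ξ| dH¹ + ∫_S ε(b) dH¹`, the infimum over
lower semicontinuous `b : S → [0, τ'(0)]`. -/
theorem network_cost_dual_formula {n : ℕ}
    (S : Set (EuclideanSpace ℝ (Fin n))) (hS : MeasurableSet S) (hSc : S ⊆ cube n)
    (hrect : CountablyOneRectifiable S)
    (ξ : EuclideanSpace ℝ (Fin n) → EuclideanSpace ℝ (Fin n))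
    (hξ : Integrable ξ (μH[1].restrict S))
    (τ : ℝ → ℝ) (hmono : MonotoneOn τ (Set.Ici 0)) (hconc : ConcaveOn ℝ (Set.Ici 0) τ)
    (h0 : τ 0 = 0)
    (L : ℝ) (hL0 : 0 ≤ L)
    (hL : Filter.Tendsto (fun m => τ m / m) (nhdsWithin 0 (Set.Ioi 0)) (nhds L)) :
    (∫⁻ z in S, ENNReal.ofReal (τ ‖ξ z‖) ∂μH[1]) =
      ⨅ b ∈ {b : EuclideanSpace ℝ (Fin n) → ℝ |
          LowerSemicontinuousOn b S ∧ ∀ x ∈ S, b x ∈ Set.Icc 0 L},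
        ((∫⁻ z in S, ENNReal.ofReal (b z * ‖ξ z‖) ∂μH[1]) +
          ∫⁻ z in S, maintenanceCost τ (b z) ∂μH[1]) := by
  have htL : ∀ m, 0 ≤ m → τ m ≤ L * m := tau_le_L hconc h0 hL
  refine le_antisymm (le_iInf fun b => le_iInf fun hb => ?_) ?_
  · -- easy direction
    obtain ⟨hlsc, -⟩ := hb
    have hbm : AEMeasurable b (μH[1].restrict S) := lscOn_aemeasurable hS hlsc _
    have hξn : AEMeasurable (fun z => ‖ξ z‖) (μH[1].restrict S) := hξ.1.norm.aemeasurable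
    have hP : AEMeasurable (fun z => ENNReal.ofReal (b z * ‖ξ z‖)) (μH[1].restrict S) :=
      (hbm.mul hξn).ennreal_ofReal
    rw [← lintegral_add_left' hP]
    exact lintegral_mono fun z => pointwise_lower τ (b z) (norm_nonneg _)
  · -- hard direction
    have hξm := hξ.1
    set ξ' := hξm.mk ξ with hξ'def
    have hξ'meas : Measurable ξ' := hξm.stronglyMeasurable_mk.measurable
    have hae : ξ =ᵐ[μH[1].restrict S] ξ' := hξm.ae_eq_mk
    have hI : (∫⁻ z in S, ENNReal.ofReal ‖ξ z‖ ∂μH[1]) ≠ ∞ := by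
      have h2 := hξ.2
      rw [HasFiniteIntegral] at h2
      simpa [ofReal_norm] using h2.ne
    have hIq : (∫⁻ z in S, ENNReal.ofReal ‖ξ' z‖ ∂μH[1]) =
        ∫⁻ z in S, ENNReal.ofReal ‖ξ z‖ ∂μH[1] :=
      lintegral_congr_ae (hae.mono fun z hz => by simp only [hz])
    apply ENNReal.le_of_forall_pos_le_add
    intro ε hε _
    set e := (ε : ℝ) / 2 with hedef
    have hepos : (0:ℝ) < e := by positivity
    set c := L * (∫⁻ z in S, ENNReal.ofReal ‖ξ z‖ ∂μH[1]).toReal with hcdef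
    have hc0 : 0 ≤ c := mul_nonneg hL0 ENNReal.toReal_nonneg
    set t := e / (c + 1) with htdef
    have ht : 0 < t := by positivity
    -- the weighted measure
    set G := fun z => ENNReal.ofReal ‖ξ' z‖ with hGdef
    have hGmeas : Measurable G := hξ'meas.norm.ennreal_ofReal
    set ν := (μH[1].restrict S).withDensity G with hνdef
    have hνuniv : ν Set.univ = ∫⁻ z in S, ENNReal.ofReal ‖ξ z‖ ∂μH[1] := by
      rw [hνdef, withDensity_apply _ MeasurableSet.univ, Measure.restrict_univ, ← hIq]
    haveI : IsFiniteMeasure ν := ⟨by rw [hνuniv]; exact lt_top_iff_ne_top.2 hI⟩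
    -- Vitali–Carathéodory
    have hfmeas : Measurable fun z => Real.toNNReal (betaFn τ L t ‖ξ' z‖) :=
      measurable_real_toNNReal.comp ((beta_measurable hmono ht).comp hξ'meas.norm)
    obtain ⟨g, hfg, hglsc, hgint⟩ :=
      exists_lt_lowerSemicontinuous_lintegral_ge ν _ hfmeas
        (ε := ENNReal.ofReal e) (ENNReal.ofReal_pos.2 hepos).ne'
    set b' := fun x => (min (ENNReal.ofReal L) (g x)).toReal with hb'def
    have hne : ∀ z, min (ENNReal.ofReal L) (g z) ≠ ∞ := fun z =>
      ne_top_of_le_ne_top ENNReal.ofReal_ne_top (min_le_left _ _)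
    have hmem : b' ∈ {b : EuclideanSpace ℝ (Fin n) → ℝ |
        LowerSemicontinuousOn b S ∧ ∀ x ∈ S, b x ∈ Set.Icc 0 L} := by
      constructor
      · exact (lsc_toReal_min hglsc L).lowerSemicontinuousOn S
      · intro x _
        refine ⟨ENNReal.toReal_nonneg, ?_⟩
        calc (min (ENNReal.ofReal L) (g x)).toReal
            ≤ (ENNReal.ofReal L).toReal :=
              ENNReal.toReal_mono ENNReal.ofReal_ne_top (min_le_left _ _)
          _ = L := ENNReal.toReal_ofReal hL0
    have hβb' : ∀ z, betaFn τ L t ‖ξ' z‖ ≤ b' z := by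
      intro z
      have hcoeq : ((Real.toNNReal (betaFn τ L t ‖ξ' z‖) : ℝ≥0) : ℝ≥0∞) =
          ENNReal.ofReal (betaFn τ L t ‖ξ' z‖) := rfl
      have h1 : ENNReal.ofReal (betaFn τ L t ‖ξ' z‖) ≤ min (ENNReal.ofReal L) (g z) := by
        refine le_min (ENNReal.ofReal_le_ofReal (beta_le_L hconc h0 htL ht _)) ?_
        rw [← hcoeq]
        exact (hfg z).le
      calc betaFn τ L t ‖ξ' z‖
          = (ENNReal.ofReal (betaFn τ L t ‖ξ' z‖)).toReal :=
            (ENNReal.toReal_ofReal (beta_nonneg hmono hL0 ht _)).symm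
        _ ≤ b' z := ENNReal.toReal_mono (hne z) h1
    -- cost estimate for the first integral
    have hA : (∫⁻ z in S, ENNReal.ofReal (b' z * ‖ξ z‖) ∂μH[1]) ≤
        (∫⁻ z in S, ENNReal.ofReal (betaFn τ L t ‖ξ' z‖ * ‖ξ' z‖) ∂μH[1]) +
          ENNReal.ofReal e := by
      have s1 : (∫⁻ z in S, ENNReal.ofReal (b' z * ‖ξ z‖) ∂μH[1]) ≤
          ∫⁻ z in S, g z * ENNReal.ofReal ‖ξ z‖ ∂μH[1] := by
        refine lintegral_mono fun z => ?_
        rw [ENNReal.ofReal_mul ENNReal.toReal_nonneg, ENNReal.ofReal_toReal (hne z)]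
        exact mul_le_mul_left (min_le_right _ _) _
      have s2 : (∫⁻ z in S, g z * ENNReal.ofReal ‖ξ z‖ ∂μH[1]) =
          ∫⁻ z in S, g z * G z ∂μH[1] :=
        lintegral_congr_ae (hae.mono fun z hz => by rw [hGdef]; simp [hz])
      have s3 : (∫⁻ z in S, g z * G z ∂μH[1]) = ∫⁻ z, g z ∂ν := by
        rw [hνdef, lintegral_withDensity_eq_lintegral_mul _ hGmeas hglsc.measurable]
        exact lintegral_congr fun z => mul_comm _ _
      have s5 : (∫⁻ z, ((Real.toNNReal (betaFn τ L t ‖ξ' z‖) : ℝ≥0) : ℝ≥0∞) ∂ν) =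
          ∫⁻ z in S, ENNReal.ofReal (betaFn τ L t ‖ξ' z‖ * ‖ξ' z‖) ∂μH[1] := by
        rw [hνdef, lintegral_withDensity_eq_lintegral_mul _ hGmeas
          hfmeas.coe_nnreal_ennreal]
        refine lintegral_congr fun z => ?_
        have hcoeq : ((Real.toNNReal (betaFn τ L t ‖ξ' z‖) : ℝ≥0) : ℝ≥0∞) =
            ENNReal.ofReal (betaFn τ L t ‖ξ' z‖) := rfl
        simp only [Pi.mul_apply, hGdef, Function.comp]
        rw [hcoeq, ENNReal.ofReal_mul (beta_nonneg hmono hL0 ht _), mul_comm]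
      calc (∫⁻ z in S, ENNReal.ofReal (b' z * ‖ξ z‖) ∂μH[1])
          ≤ ∫⁻ z, g z ∂ν := by rw [← s3, ← s2]; exact s1
        _ ≤ (∫⁻ z, ((Real.toNNReal (betaFn τ L t ‖ξ' z‖) : ℝ≥0) : ℝ≥0∞) ∂ν) +
              ENNReal.ofReal e := hgint
        _ = _ := by rw [s5]
    -- second integral estimate
    have hB : (∫⁻ z in S, maintenanceCost τ (b' z) ∂μH[1]) ≤
        ∫⁻ z in S, maintenanceCost τ (betaFn τ L t ‖ξ' z‖) ∂μH[1] :=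
      lintegral_mono fun z => maint_anti (hβb' z)
    -- combine
    have hβmeas : Measurable fun z =>
        ENNReal.ofReal (betaFn τ L t ‖ξ' z‖ * ‖ξ' z‖) :=
      (((beta_measurable hmono ht).comp hξ'meas.norm).mul hξ'meas.norm).ennreal_ofReal
    have hτmeas : Measurable fun z => ENNReal.ofReal (τ ‖ξ' z‖) := by
      have hmax : Monotone fun x : ℝ => τ (max x 0) := fun x y hxy =>
        hmono (Set.mem_Ici.2 (le_max_right _ _)) (Set.mem_Ici.2 (le_max_right _ _))
          (max_le_max hxy le_rfl)
      have : (fun z => ENNReal.ofReal (τ ‖ξ' z‖)) =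
          fun z => ENNReal.ofReal (τ (max ‖ξ' z‖ 0)) := by
        funext z; rw [max_eq_left (norm_nonneg _)]
      rw [this]
      exact (hmax.measurable.comp hξ'meas.norm).ennreal_ofReal
    have hsum : (∫⁻ z in S, ENNReal.ofReal (betaFn τ L t ‖ξ' z‖ * ‖ξ' z‖) ∂μH[1]) +
        (∫⁻ z in S, maintenanceCost τ (betaFn τ L t ‖ξ' z‖) ∂μH[1]) ≤
        (∫⁻ z in S, ENNReal.ofReal (τ ‖ξ z‖) ∂μH[1]) + ENNReal.ofReal e := by
      rw [← lintegral_add_left hβmeas]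
      calc (∫⁻ z in S, (ENNReal.ofReal (betaFn τ L t ‖ξ' z‖ * ‖ξ' z‖) +
              maintenanceCost τ (betaFn τ L t ‖ξ' z‖)) ∂μH[1])
          ≤ ∫⁻ z in S, (ENNReal.ofReal (τ ‖ξ' z‖) +
              ENNReal.ofReal (L * t) * ENNReal.ofReal ‖ξ' z‖) ∂μH[1] :=
            lintegral_mono fun z => by
              have hb := combined hmono hconc h0 hL0 htL ht (norm_nonneg (ξ' z))
              refine le_trans hb (add_le_add_right (mul_le_mul_left ?_ _) _)
              exact le_refl _
        _ = (∫⁻ z in S, ENNReal.ofReal (τ ‖ξ' z‖) ∂μH[1]) +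
              ENNReal.ofReal (L * t) * ∫⁻ z in S, ENNReal.ofReal ‖ξ' z‖ ∂μH[1] := by
            rw [lintegral_add_left hτmeas, lintegral_const_mul' _ _ ENNReal.ofReal_ne_top]
        _ ≤ (∫⁻ z in S, ENNReal.ofReal (τ ‖ξ z‖) ∂μH[1]) + ENNReal.ofReal e := by
            refine add_le_add (le_of_eq (lintegral_congr_ae
              (hae.mono fun z hz => by simp only [hz]))) ?_
            rw [hIq, ← ENNReal.ofReal_toReal hI,
              ← ENNReal.ofReal_mul (mul_nonneg hL0 ht.le)]
            refine ENNReal.ofReal_le_ofReal ?_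
            have hte : t * (c + 1) = e := div_mul_cancel₀ e (by positivity)
            have : L * t * (∫⁻ z in S, ENNReal.ofReal ‖ξ z‖ ∂μH[1]).toReal = t * c := by
              rw [hcdef]; ring
            rw [this]
            nlinarith
    -- finish
    calc (⨅ b ∈ {b : EuclideanSpace ℝ (Fin n) → ℝ |
            LowerSemicontinuousOn b S ∧ ∀ x ∈ S, b x ∈ Set.Icc 0 L},
          ((∫⁻ z in S, ENNReal.ofReal (b z * ‖ξ z‖) ∂μH[1]) +
            ∫⁻ z in S, maintenanceCost τ (b z) ∂μH[1]))
        ≤ (∫⁻ z in S, ENNReal.ofReal (b' z * ‖ξ z‖) ∂μH[1]) +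
            ∫⁻ z in S, maintenanceCost τ (b' z) ∂μH[1] := iInf₂_le b' hmem
      _ ≤ ((∫⁻ z in S, ENNReal.ofReal (betaFn τ L t ‖ξ' z‖ * ‖ξ' z‖) ∂μH[1]) +
            ENNReal.ofReal e) +
            ∫⁻ z in S, maintenanceCost τ (betaFn τ L t ‖ξ' z‖) ∂μH[1] :=
          add_le_add hA hB
      _ = ((∫⁻ z in S, ENNReal.ofReal (betaFn τ L t ‖ξ' z‖ * ‖ξ' z‖) ∂μH[1]) +
            ∫⁻ z in S, maintenanceCost τ (betaFn τ L t ‖ξ' z‖) ∂μH[1]) +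
            ENNReal.ofReal e := by ring
      _ ≤ ((∫⁻ z in S, ENNReal.ofReal (τ ‖ξ z‖) ∂μH[1]) + ENNReal.ofReal e) +
            ENNReal.ofReal e := add_le_add_left hsum _
      _ = (∫⁻ z in S, ENNReal.ofReal (τ ‖ξ z‖) ∂μH[1]) + ε := by
          rw [add_assoc, ← ENNReal.ofReal_add hepos.le hepos.le]
          congr 1
          rw [hedef]
          rw [show (ε:ℝ)/2 + (ε:ℝ)/2 = (ε:ℝ) by ring, ENNReal.ofReal_coe_nnreal]
end
end

section
/- If |ξ| : S → [0,∞) is upper semicontinuous and τ is a transportation cost with τ'(0) < ∞, then the function b = −max ∂(−τ)(|ξ|) (the negative of the maximal subgradient of the convex function −τ at |ξ|) is lower semicontinuous on S, takes values in [0, τ'(0)], and attains the infimum: ∫_S τ(|ξ|) dH¹ = ∫_S b|ξ| dH¹ + ∫_S ε(b) dH¹. -/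
open MeasureTheory Set Filter Topology ENNReal

noncomputable section

/-- The maximal subgradient of the convex function `−τ` at `m` (relative to `[0,∞)`). -/
def maxSubgradNeg (τ : ℝ → ℝ) (m : ℝ) : ℝ :=
  sSup {v : ℝ | ∀ m' ∈ Set.Ici (0 : ℝ), -τ m + v * (m' - m) ≤ -τ m'}

namespace SubgradAux

variable {τ : ℝ → ℝ} {L : ℝ}

def sl (τ : ℝ → ℝ) (a b : ℝ) : ℝ := (τ b - τ a) / (b - a)

lemma secant_anti (hconc : ConcaveOn ℝ (Set.Ici 0) τ) {a x y : ℝ}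
    (ha : a ∈ Set.Ici (0:ℝ)) (hx : x ∈ Set.Ici (0:ℝ)) (hy : y ∈ Set.Ici (0:ℝ))
    (hxa : x ≠ a) (hya : y ≠ a) (hxy : x ≤ y) : sl τ a y ≤ sl τ a x := by
  have h := hconc.neg.secant_mono ha hx hy hxa hya hxy
  simp only [Pi.neg_apply] at h
  have e1 : (-τ x - -τ a) / (x - a) = -((τ x - τ a)/(x - a)) := by ring
  have e2 : (-τ y - -τ a) / (y - a) = -((τ y - τ a)/(y - a)) := by ring
  rw [e1, e2] at h
  simpa [sl] using neg_le_neg h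

lemma sl_symm (τ : ℝ → ℝ) (a b : ℝ) : sl τ a b = sl τ b a := by
  unfold sl
  rcases eq_or_ne a b with rfl | h
  · simp
  · rw [div_eq_div_iff (by simpa using sub_ne_zero.2 (Ne.symm h)) (by simpa using sub_ne_zero.2 h)]
    ring

section

variable (hmono : MonotoneOn τ (Set.Ici 0)) (hconc : ConcaveOn ℝ (Set.Ici 0) τ)
  (h0 : τ 0 = 0) (hL0 : 0 ≤ L)
  (hL : Filter.Tendsto (fun m => τ m / m) (nhdsWithin 0 (Set.Ioi 0)) (nhds L))

include hconc h0 hL in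
/-- slope from 0 is at most L -/
lemma sl_zero_le (t : ℝ) (ht : 0 < t) : sl τ 0 t ≤ L := by
  refine ge_of_tendsto hL ?_
  filter_upwards [Ioo_mem_nhdsGT ht] with s hs
  have h := secant_anti hconc (le_refl (0:ℝ)) (le_of_lt hs.1) (le_of_lt ht)
    (ne_of_gt hs.1) (ne_of_gt ht) hs.2.le
  simpa [sl, h0] using h

include hconc h0 hL in
/-- any slope between nonneg points is ≤ L -/
lemma sl_le_L {a b : ℝ} (ha : 0 ≤ a) (hab : a < b) : sl τ a b ≤ L := by
  rcases eq_or_lt_of_le ha with rfl | ha'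
  · exact sl_zero_le hconc h0 hL b hab
  · have hb : (0:ℝ) < b := ha'.trans hab
    have h := secant_anti hconc (le_of_lt hb) (le_refl (0:ℝ)) (le_of_lt ha')
      (ne_of_lt hb) (ne_of_lt hab) ha
    rw [sl_symm τ b a, sl_symm τ b 0] at h
    exact h.trans (sl_zero_le hconc h0 hL b hb)

/-- the right-slope supremum: the candidate for `b(m) = -maxSubgradNeg τ m`. -/
def g (τ : ℝ → ℝ) (m : ℝ) : ℝ := sSup (sl τ m '' Set.Ioi m)

lemma g_set_nonempty (m : ℝ) : (sl τ m '' Set.Ioi m).Nonempty :=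
  ⟨sl τ m (m+1), ⟨m+1, by simp, rfl⟩⟩

include hconc h0 hL in
lemma g_set_bddAbove {m : ℝ} (hm : 0 ≤ m) : BddAbove (sl τ m '' Set.Ioi m) := by
  refine ⟨L, ?_⟩
  rintro x ⟨m', hm', rfl⟩
  exact sl_le_L hconc h0 hL hm hm'

include hconc h0 hL in
lemma sl_le_g {m m' : ℝ} (hm : 0 ≤ m) (hm' : m < m') : sl τ m m' ≤ g τ m :=
  le_csSup (g_set_bddAbove hconc h0 hL hm) ⟨m', hm', rfl⟩

include hconc h0 hL in
lemma g_le_L {m : ℝ} (hm : 0 ≤ m) : g τ m ≤ L :=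
  csSup_le (g_set_nonempty m) (by rintro x ⟨m', hm', rfl⟩; exact sl_le_L hconc h0 hL hm hm')

include hmono hconc h0 hL in
lemma g_nonneg {m : ℝ} (hm : 0 ≤ m) : 0 ≤ g τ m := by
  refine le_trans ?_ (sl_le_g hconc h0 hL hm (lt_add_one m))
  have h1 : τ m ≤ τ (m+1) :=
    hmono hm (by simp only [Set.mem_Ici]; linarith) (by linarith)
  unfold sl
  exact div_nonneg (by linarith) (by linarith)

include hmono hconc h0 hL in
/-- subgradient inequality -/
lemma g_subgrad {m m' : ℝ} (hm : 0 ≤ m) (hm' : 0 ≤ m') :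
    τ m' ≤ τ m + g τ m * (m' - m) := by
  rcases lt_trichotomy m m' with h | rfl | h
  · have hs := sl_le_g hconc h0 hL hm h
    unfold sl at hs
    rw [div_le_iff₀ (by linarith)] at hs
    linarith
  · simp
  · -- m' < m : need g τ m ≤ sl τ m' m
    have hgo : g τ m ≤ sl τ m m' := by
      refine csSup_le (g_set_nonempty m) ?_
      rintro x ⟨m'', hm'', rfl⟩
      have hmm : m < m'' := hm''
      have h1 := secant_anti hconc hm hm' (le_trans hm hmm.le)
        (ne_of_lt h) (ne_of_gt hmm) (by linarith)
      exact h1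
    rw [sl_symm] at hgo
    unfold sl at hgo
    rw [le_div_iff₀ (by linarith : (0:ℝ) < m - m')] at hgo
    have h2 : g τ m * (m' - m) = -(g τ m * (m - m')) := by ring
    linarith [hgo]

include hmono hconc h0 hL in
/-- identification of maxSubgradNeg with -g -/
lemma maxSubgradNeg_eq {m : ℝ} (hm : 0 ≤ m) : maxSubgradNeg τ m = - g τ m := by
  have hmem : -g τ m ∈ {v : ℝ | ∀ m' ∈ Set.Ici (0 : ℝ), -τ m + v * (m' - m) ≤ -τ m'} := by
    intro m' hm'
    have h := g_subgrad hmono hconc h0 hL hm hm'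
    nlinarith [h]
  have hub : ∀ v ∈ {v : ℝ | ∀ m' ∈ Set.Ici (0 : ℝ), -τ m + v * (m' - m) ≤ -τ m'},
      v ≤ -g τ m := by
    intro v hv
    have hgle : g τ m ≤ -v := by
      refine csSup_le (g_set_nonempty m) ?_
      rintro x ⟨m', hm', rfl⟩
      have hmm : m < m' := hm'
      have h1 := hv m' (le_trans hm hmm.le)
      unfold sl
      rw [div_le_iff₀ (by linarith)]
      nlinarith
    linarith
  unfold maxSubgradNeg
  exact le_antisymm (csSup_le ⟨_, hmem⟩ hub) (le_csSup ⟨-g τ m, hub⟩ hmem)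

include hconc h0 hL in
lemma g_anti : AntitoneOn (g τ) (Set.Ici 0) := by
  intro m1 hm1 m2 hm2 h12
  rcases eq_or_lt_of_le h12 with rfl | h12'
  · exact le_rfl
  refine csSup_le (g_set_nonempty m2) ?_
  rintro x ⟨m', hm', rfl⟩
  have hmm : m2 < m' := hm'
  have h1 : sl τ m2 m' ≤ sl τ m1 m' := by
    have h2 := secant_anti hconc (le_trans hm2 hmm.le) hm1 hm2
      (ne_of_lt (lt_of_le_of_lt h12 hmm)) (ne_of_lt hmm) h12
    rw [sl_symm τ m' m1, sl_symm τ m' m2] at h2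
    exact h2
  exact h1.trans (sl_le_g hconc h0 hL hm1 (lt_of_le_of_lt h12 hmm))


include hmono hconc h0 hL hL0 in
/-- right lower-semicontinuity ingredient: values of g just to the right stay above any c < g m -/
lemma g_right_lt {m c : ℝ} (hm : 0 ≤ m) (hc : c < g τ m) : ∃ t, m < t ∧ c < g τ t := by
  rcases lt_or_ge c 0 with hc0 | hc0
  · exact ⟨m + 1, lt_add_one m, lt_of_lt_of_le hc0
      (g_nonneg hmono hconc h0 hL (by linarith))⟩
  -- 0 ≤ c
  set c' := (c + g τ m) / 2 with hc'def
  have hcc' : c < c' := by simp only [hc'def]; linarith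
  have hc'g : c' < g τ m := by simp only [hc'def]; linarith
  obtain ⟨x, ⟨m', hm', rfl⟩, hx⟩ := exists_lt_of_lt_csSup (g_set_nonempty m) hc'g
  have hmm' : m < m' := hm'
  set t := m + min ((c' - c) * (m' - m) / (2 * (L + 1))) ((m' - m) / 2) with htdef
  have hpos : (0:ℝ) < (c' - c) * (m' - m) / (2 * (L + 1)) := by
    apply div_pos
    · nlinarith
    · linarith
  have htm : m < t := by
    simp only [htdef, lt_add_iff_pos_right, lt_min_iff]
    constructor
    · exact hpos
    · linarith
  have htm' : t < m' := by
    have : min ((c' - c) * (m' - m) / (2 * (L + 1))) ((m' - m) / 2) ≤ (m' - m) / 2 :=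
      min_le_right _ _
    simp only [htdef]; linarith
  have hLt : L * (t - m) < (c' - c) * (m' - m) := by
    have h1 : t - m ≤ (c' - c) * (m' - m) / (2 * (L + 1)) := by
      simp only [htdef]; simp [min_le_left]
    have h2 : L * (t - m) ≤ L * ((c' - c) * (m' - m) / (2 * (L + 1))) := by
      apply mul_le_mul_of_nonneg_left h1 hL0
    have h3 : L * ((c' - c) * (m' - m) / (2 * (L + 1))) < (c' - c) * (m' - m) := by
      rw [mul_div_assoc']
      rw [div_lt_iff₀ (by linarith : (0:ℝ) < 2 * (L + 1))]
      have hX : 0 < (c' - c) * (m' - m) := by nlinarith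
      nlinarith [mul_pos hX (show (0:ℝ) < L + 2 by linarith)]
    exact lt_of_le_of_lt h2 h3
  -- τ t ≤ τ m + L * (t - m)
  have hτt : τ t ≤ τ m + L * (t - m) := by
    have hs := sl_le_L hconc h0 hL hm htm
    unfold sl at hs
    rw [div_le_iff₀ (by linarith)] at hs
    linarith
  -- sl τ m m' > c'
  have hslmm' : c' * (m' - m) < τ m' - τ m := by
    unfold sl at hx
    rw [lt_div_iff₀ (by linarith)] at hx
    linarith
  -- conclude c < sl τ t m'
  have hnum : c * (m' - t) < τ m' - τ t := by
    have h4 : c * (m' - t) ≤ c * (m' - m) := by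
      apply mul_le_mul_of_nonneg_left (by linarith) hc0
    nlinarith
  refine ⟨t, htm, ?_⟩
  have h5 : sl τ t m' ≤ g τ t := sl_le_g hconc h0 hL (by linarith) htm'
  have h6 : c < sl τ t m' := by
    unfold sl
    rw [lt_div_iff₀ (by linarith)]
    linarith
  linarith

include hmono hconc h0 hL in
/-- pointwise identity: maintenance cost of g m is attained at m -/
lemma maintenance_eq {m : ℝ} (hm : 0 ≤ m) :
    maintenanceCost τ (g τ m) = ENNReal.ofReal (τ m - g τ m * m) := by
  unfold maintenanceCost
  apply le_antisymm
  · refine iSup₂_le fun m' hm' => ?_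
    apply ENNReal.ofReal_le_ofReal
    have := g_subgrad hmono hconc h0 hL hm hm'
    nlinarith [this]
  · exact le_iSup₂ (f := fun m' _ => ENNReal.ofReal (τ m' - g τ m * m')) m hm

include hmono hconc h0 hL in
lemma tau_nonneg_decomp {m : ℝ} (hm : 0 ≤ m) :
    0 ≤ τ m - g τ m * m ∧ 0 ≤ g τ m * m := by
  constructor
  · have := g_subgrad hmono hconc h0 hL hm (le_refl (0:ℝ))
    rw [h0] at this
    nlinarith
  · exact mul_nonneg (g_nonneg hmono hconc h0 hL hm) hm

include hmono hconc h0 hL in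
lemma ofReal_tau_split {m : ℝ} (hm : 0 ≤ m) :
    ENNReal.ofReal (τ m) =
      ENNReal.ofReal (g τ m * m) + ENNReal.ofReal (τ m - g τ m * m) := by
  obtain ⟨h1, h2⟩ := tau_nonneg_decomp hmono hconc h0 hL hm
  rw [← ENNReal.ofReal_add h2 h1]
  ring_nf

end
end SubgradAux

/-- if `|ξ|` is upper semicontinuous on `S` and `τ` is a transportation cost
with `τ'(0) = L < ∞`, then `b = −max ∂(−τ)(|ξ|)` is lower semicontinuous on `S`, takes
values in `[0, τ'(0)]`, and attains the infimum in the dual formula for the network cost. -/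

theorem maximal_subgradient_minimizer {n : ℕ}
    (S : Set (EuclideanSpace ℝ (Fin n))) (hS : MeasurableSet S)
    (hrect : CountablyOneRectifiable S)
    (ξ : EuclideanSpace ℝ (Fin n) → EuclideanSpace ℝ (Fin n))
    (hξ : Integrable ξ (μH[1].restrict S))
    (husc : UpperSemicontinuousOn (fun x => ‖ξ x‖) S)
    (τ : ℝ → ℝ) (hmono : MonotoneOn τ (Set.Ici 0)) (hconc : ConcaveOn ℝ (Set.Ici 0) τ)
    (h0 : τ 0 = 0)
    (L : ℝ) (hL0 : 0 ≤ L)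
    (hL : Filter.Tendsto (fun m => τ m / m) (nhdsWithin 0 (Set.Ioi 0)) (nhds L)) :
    LowerSemicontinuousOn (fun x => -maxSubgradNeg τ ‖ξ x‖) S ∧
    (∀ x ∈ S, -maxSubgradNeg τ ‖ξ x‖ ∈ Set.Icc 0 L) ∧
    (∫⁻ z in S, ENNReal.ofReal (τ ‖ξ z‖) ∂μH[1]) =
      (∫⁻ z in S, ENNReal.ofReal ((-maxSubgradNeg τ ‖ξ z‖) * ‖ξ z‖) ∂μH[1]) +
        ∫⁻ z in S, maintenanceCost τ (-maxSubgradNeg τ ‖ξ z‖) ∂μH[1] := by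
  open SubgradAux in
  have hrw : ∀ z, -maxSubgradNeg τ ‖ξ z‖ = SubgradAux.g τ ‖ξ z‖ := fun z => by
    rw [SubgradAux.maxSubgradNeg_eq hmono hconc h0 hL (norm_nonneg _), neg_neg]
  refine ⟨?_, ?_, ?_⟩
  · -- lower semicontinuity
    intro x hx c hc
    replace hc : c < SubgradAux.g τ ‖ξ x‖ := by rw [← hrw x]; exact hc
    obtain ⟨t, htx, hct⟩ :=
      SubgradAux.g_right_lt hmono hconc h0 hL0 hL (norm_nonneg (ξ x)) hc
    have ht0 : (0:ℝ) ≤ t := le_trans (norm_nonneg _) htx.le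
    filter_upwards [husc x hx t htx] with y hy
    show c < -maxSubgradNeg τ ‖ξ y‖
    rw [hrw y]
    exact lt_of_lt_of_le hct
      (SubgradAux.g_anti hconc h0 hL (norm_nonneg (ξ y)) ht0 hy.le)
  · -- range
    intro x hx
    rw [hrw x]
    exact ⟨SubgradAux.g_nonneg hmono hconc h0 hL (norm_nonneg _),
      SubgradAux.g_le_L hconc h0 hL (norm_nonneg _)⟩
  · -- integral identity
    have hnorm : AEMeasurable (fun z => ‖ξ z‖) (μH[1].restrict S) :=
      hξ.aestronglyMeasurable.norm.aemeasurable
    have hGanti : Antitone (fun t : ℝ => SubgradAux.g τ (max t 0)) := fun t1 t2 h12 =>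
      SubgradAux.g_anti hconc h0 hL (Set.mem_Ici.2 (le_max_right _ _)) (Set.mem_Ici.2 (le_max_right _ _))
        (max_le_max h12 le_rfl)
    have hbmeas : AEMeasurable (fun z => SubgradAux.g τ ‖ξ z‖) (μH[1].restrict S) := by
      have h1 : AEMeasurable (fun z => SubgradAux.g τ (max ‖ξ z‖ 0)) (μH[1].restrict S) :=
        hGanti.measurable.comp_aemeasurable hnorm
      have h2 : (fun z => SubgradAux.g τ ‖ξ z‖)
          = fun z => SubgradAux.g τ (max ‖ξ z‖ 0) := by
        funext z; rw [max_eq_left (norm_nonneg _)]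
      rw [h2]; exact h1
    have hA : AEMeasurable
        (fun z => ENNReal.ofReal (SubgradAux.g τ ‖ξ z‖ * ‖ξ z‖)) (μH[1].restrict S) :=
      ENNReal.measurable_ofReal.comp_aemeasurable (hbmeas.mul hnorm)
    calc (∫⁻ z in S, ENNReal.ofReal (τ ‖ξ z‖) ∂μH[1])
        = ∫⁻ z in S, (ENNReal.ofReal (SubgradAux.g τ ‖ξ z‖ * ‖ξ z‖)
            + ENNReal.ofReal (τ ‖ξ z‖ - SubgradAux.g τ ‖ξ z‖ * ‖ξ z‖)) ∂μH[1] :=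
          lintegral_congr fun z =>
            SubgradAux.ofReal_tau_split hmono hconc h0 hL (norm_nonneg _)
      _ = (∫⁻ z in S, ENNReal.ofReal (SubgradAux.g τ ‖ξ z‖ * ‖ξ z‖) ∂μH[1])
            + ∫⁻ z in S, ENNReal.ofReal (τ ‖ξ z‖ - SubgradAux.g τ ‖ξ z‖ * ‖ξ z‖) ∂μH[1] :=
          lintegral_add_left' hA _
      _ = (∫⁻ z in S, ENNReal.ofReal ((-maxSubgradNeg τ ‖ξ z‖) * ‖ξ z‖) ∂μH[1])
            + ∫⁻ z in S, maintenanceCost τ (-maxSubgradNeg τ ‖ξ z‖) ∂μH[1] := by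
          congr 1
          · exact lintegral_congr fun z => by rw [hrw z]
          · refine lintegral_congr fun z => ?_
            rw [hrw z,
              SubgradAux.maintenance_eq hmono hconc h0 hL (norm_nonneg (ξ z))]
end
end

section
/- Let b : C → (0,∞] be the extended friction of a city (S,a,b) with a < ∞, let d = d_{S,a,b} be the urban metric, let S^N be an approximating sequence for S (increasing finite-length closed pieces with S = ∪_N S^N up to an H¹-null set), and let d^N = d_{S^N,a,b}. Then for all x,y ∈ C with d(x,y) < ∞, d^N(x,y) decreases to d(x,y) as N → ∞. Similarly, with b_λ = max(λ, b) and d_λ = d_{S,a,b_λ}, one has d_λ(x,y) ↓ d(x,y) as λ ↓ 0, without assuming a < ∞. -/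
open MeasureTheory Set Filter Topology ENNReal

noncomputable section

/-- A Lipschitz path in `C` from `x` to `y` (parameterized on `[0,1]`). -/
def IsPathIn {n : ℕ} (C : Set (EuclideanSpace ℝ (Fin n))) (x y : EuclideanSpace ℝ (Fin n))
    (γ : ℝ → EuclideanSpace ℝ (Fin n)) : Prop :=
  (∃ K : NNReal, LipschitzWith K γ) ∧ γ 0 = x ∧ γ 1 = y ∧ Set.MapsTo γ (Set.Icc 0 1) C

/-- The generalized urban metric of the city `(S,a,b)`:
`d(x,y) = inf_γ ∫_{γ∩S} b dH¹ + a·H¹(γ\S)`, infimum over Lipschitz paths in `C`. -/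
def hausUrbanDist {n : ℕ} (C S : Set (EuclideanSpace ℝ (Fin n))) (a : ℝ≥0∞)
    (b : EuclideanSpace ℝ (Fin n) → ℝ≥0∞) (x y : EuclideanSpace ℝ (Fin n)) : ℝ≥0∞ :=
  ⨅ γ ∈ {γ | IsPathIn C x y γ},
    (∫⁻ z in (γ '' Set.Icc (0 : ℝ) 1) ∩ S, b z ∂μH[1]) +
      a * μH[1] ((γ '' Set.Icc (0 : ℝ) 1) \ S)

section Aux

variable {α : Type*} [MeasurableSpace α] {μ : Measure α} {b : α → ℝ≥0∞} {a : ℝ≥0∞}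
variable {T A B : Set α}

lemma setLIntegral_le_const_mul (hE : MeasurableSet A) (h : ∀ x ∈ A, b x ≤ a) :
    ∫⁻ z in A, b z ∂μ ≤ a * μ A := by
  calc ∫⁻ z in A, b z ∂μ ≤ ∫⁻ _ in A, a ∂μ :=
        lintegral_mono_ae ((ae_restrict_mem hE).mono h)
    _ = a * μ A := setLIntegral_const A a

lemma measure_diff_split (hT : MeasurableSet T) (hA : MeasurableSet A) (hB : MeasurableSet B)
    (hAB : A ⊆ B) : μ (T \ A) = μ (T \ B) + μ (T ∩ (B \ A)) := by
  have hset : T \ A = (T \ B) ∪ (T ∩ (B \ A)) := by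
    ext z
    constructor
    · rintro ⟨hzT, hzA⟩
      by_cases hzB : z ∈ B
      · exact Or.inr ⟨hzT, hzB, hzA⟩
      · exact Or.inl ⟨hzT, hzB⟩
    · rintro (⟨hzT, hzB⟩ | ⟨hzT, hzB, hzA⟩)
      · exact ⟨hzT, fun hz => hzB (hAB hz)⟩
      · exact ⟨hzT, hzA⟩
  rw [hset, measure_union _ (hT.inter (hB.diff hA))]
  exact Set.disjoint_left.2 fun z hz hz' => hz.2 hz'.2.1

lemma lintegral_inter_split (hT : MeasurableSet T) (hA : MeasurableSet A) (hB : MeasurableSet B)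
    (hAB : A ⊆ B) :
    ∫⁻ z in T ∩ B, b z ∂μ = (∫⁻ z in T ∩ A, b z ∂μ) + ∫⁻ z in T ∩ (B \ A), b z ∂μ := by
  have hset : T ∩ B = (T ∩ A) ∪ (T ∩ (B \ A)) := by
    ext z
    constructor
    · rintro ⟨hzT, hzB⟩
      by_cases hzA : z ∈ A
      · exact Or.inl ⟨hzT, hzA⟩
      · exact Or.inr ⟨hzT, hzB, hzA⟩
    · rintro (⟨hzT, hzA⟩ | ⟨hzT, hzB, hzA⟩)
      · exact ⟨hzT, hAB hzA⟩
      · exact ⟨hzT, hzB⟩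
  rw [hset, lintegral_union (hT.inter (hB.diff hA))]
  exact Set.disjoint_left.2 fun z hz hz' => hz'.2.2 hz.2

/-- Cost is antitone in the network, given `b ≤ a` on the larger network. -/
lemma cost_antitone (hT : MeasurableSet T) (hA : MeasurableSet A) (hB : MeasurableSet B)
    (hAB : A ⊆ B) (hbB : ∀ x ∈ B, b x ≤ a) :
    (∫⁻ z in T ∩ B, b z ∂μ) + a * μ (T \ B) ≤ (∫⁻ z in T ∩ A, b z ∂μ) + a * μ (T \ A) := by
  rw [lintegral_inter_split hT hA hB hAB, measure_diff_split hT hA hB hAB, mul_add]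
  have h1 : ∫⁻ z in T ∩ (B \ A), b z ∂μ ≤ a * μ (T ∩ (B \ A)) :=
    setLIntegral_le_const_mul (hT.inter (hB.diff hA)) fun z hz => hbB z hz.2.1
  calc (∫⁻ z in T ∩ A, b z ∂μ) + (∫⁻ z in T ∩ (B \ A), b z ∂μ) + a * μ (T \ B)
      ≤ (∫⁻ z in T ∩ A, b z ∂μ) + a * μ (T ∩ (B \ A)) + a * μ (T \ B) := by gcongr
    _ = (∫⁻ z in T ∩ A, b z ∂μ) + (a * μ (T \ B) + a * μ (T ∩ (B \ A))) := by ring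

/-- Cost of a smaller network exceeds that of a larger one by at most `a · μ(T ∩ (B \ A))`. -/
lemma cost_le_cost_add (hT : MeasurableSet T) (hA : MeasurableSet A) (hB : MeasurableSet B)
    (hAB : A ⊆ B) :
    (∫⁻ z in T ∩ A, b z ∂μ) + a * μ (T \ A) ≤
      ((∫⁻ z in T ∩ B, b z ∂μ) + a * μ (T \ B)) + a * μ (T ∩ (B \ A)) := by
  rw [measure_diff_split hT hA hB hAB, mul_add]
  calc (∫⁻ z in T ∩ A, b z ∂μ) + (a * μ (T \ B) + a * μ (T ∩ (B \ A)))
      = (∫⁻ z in T ∩ A, b z ∂μ) + a * μ (T \ B) + a * μ (T ∩ (B \ A)) := by ring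
    _ ≤ ((∫⁻ z in T ∩ B, b z ∂μ) + a * μ (T \ B)) + a * μ (T ∩ (B \ A)) := by
        gcongr

end Aux

lemma path_image_measure_ne_top {n : ℕ} {γ : ℝ → EuclideanSpace ℝ (Fin n)} {K : NNReal}
    (hK : LipschitzWith K γ) : μH[1] (γ '' Set.Icc (0 : ℝ) 1) ≠ ⊤ := by
  have h := hK.hausdorffMeasure_image_le (by norm_num : (0:ℝ) ≤ 1) (Set.Icc (0 : ℝ) 1)
  have h1 : (μH[1] : Measure ℝ) (Set.Icc (0 : ℝ) 1) = 1 := by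
    rw [MeasureTheory.hausdorffMeasure_real, Real.volume_Icc]
    norm_num
  rw [h1, mul_one, ENNReal.rpow_one] at h
  exact ne_top_of_le_ne_top ENNReal.coe_ne_top h

/-- monotone approximation of the urban metric. If `a < ∞` then along an
approximating sequence `S^N` of the network the metrics `d^N = d_{S^N,a,b}` decrease to
`d = d_{S,a,b}` wherever `d` is finite; and for the truncated frictions `b_λ = max(λ,b)`
the metrics `d_λ = d_{S,a,b_λ}` decrease to `d` as `λ ↓ 0`, without assuming `a < ∞`. -/
theorem urban_metric_approximation {n : ℕ}
    (S : Set (EuclideanSpace ℝ (Fin n))) (hS : MeasurableSet S) (hSc : S ⊆ cube n)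
    (hrect : CountablyOneRectifiable S)
    (a : ℝ≥0∞) (b : EuclideanSpace ℝ (Fin n) → ℝ≥0∞) (hba : ∀ x ∈ S, b x ≤ a)
    (SN : ℕ → Set (EuclideanSpace ℝ (Fin n))) (hmono : Monotone SN)
    (hclosed : ∀ N, IsClosed (SN N)) (hsub : ∀ N, SN N ⊆ S)
    (hfin : ∀ N, μH[1] (SN N) < ⊤)
    (hnull : μH[1] (S \ ⋃ N, SN N) = 0) :
    ((a ≠ ⊤ → ∀ x ∈ cube n, ∀ y ∈ cube n,
        hausUrbanDist (cube n) S a b x y ≠ ⊤ →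
        (Antitone (fun N => hausUrbanDist (cube n) (SN N) a b x y) ∧
          Filter.Tendsto (fun N => hausUrbanDist (cube n) (SN N) a b x y) Filter.atTop
            (nhds (hausUrbanDist (cube n) S a b x y)))) ∧
      ∀ x ∈ cube n, ∀ y ∈ cube n,
        hausUrbanDist (cube n) S a b x y ≠ ⊤ →
        Filter.Tendsto
          (fun lam : ℝ≥0∞ => hausUrbanDist (cube n) S a (fun z => max lam (b z)) x y)
          (nhdsWithin 0 (Set.Ioi 0)) (nhds (hausUrbanDist (cube n) S a b x y))) := by
  -- measurability of path images
  have hTmeas : ∀ γ : ℝ → EuclideanSpace ℝ (Fin n), (∃ K : NNReal, LipschitzWith K γ) →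
      MeasurableSet (γ '' Set.Icc (0 : ℝ) 1) := by
    rintro γ ⟨K, hK⟩
    exact (isCompact_Icc.image hK.continuous).measurableSet
  -- monotone comparison of urban distances between nested networks inside S
  have key : ∀ x y : EuclideanSpace ℝ (Fin n), ∀ A B : Set (EuclideanSpace ℝ (Fin n)),
      MeasurableSet A → MeasurableSet B → A ⊆ B → B ⊆ S →
      hausUrbanDist (cube n) B a b x y ≤ hausUrbanDist (cube n) A a b x y := by
    intro x y A B hA hB hAB hBS
    refine iInf₂_mono fun γ hγ => ?_
    exact cost_antitone (hTmeas γ hγ.1) hA hB hAB fun z hz => hba z (hBS hz)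
  constructor
  · -- part 1: approximation by S^N, assuming a ≠ ⊤
    intro ha x hx y hy hd
    have hanti : Antitone (fun N => hausUrbanDist (cube n) (SN N) a b x y) := by
      intro N M hNM
      exact key x y (SN N) (SN M) (hclosed N).measurableSet (hclosed M).measurableSet
        (hmono hNM) (hsub M)
    refine ⟨hanti, ?_⟩
    rw [ENNReal.tendsto_nhds hd]
    intro ε hε
    -- lower bound: d ≤ d^N always
    have hlow : ∀ N, hausUrbanDist (cube n) S a b x y ≤ hausUrbanDist (cube n) (SN N) a b x y :=
      fun N => key x y (SN N) S (hclosed N).measurableSet hS (hsub N) subset_rfl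
    -- pick a near-optimal path
    have hone : hausUrbanDist (cube n) S a b x y < hausUrbanDist (cube n) S a b x y + ε / 2 :=
      ENNReal.lt_add_right hd (ENNReal.half_pos hε.ne').ne'
    rw [hausUrbanDist] at hone
    simp only [iInf_lt_iff] at hone
    obtain ⟨γ, hγ, hcost⟩ := hone
    set T := γ '' Set.Icc (0 : ℝ) 1 with hT
    have hTm : MeasurableSet T := hTmeas γ hγ.1
    obtain ⟨K, hK⟩ := hγ.1
    have hTfin : μH[1] T ≠ ⊤ := path_image_measure_ne_top hK
    -- the remainder measures tend to zero
    have hiInter : ⋂ N, (T ∩ (S \ SN N)) = T ∩ (S \ ⋃ N, SN N) := by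
      rw [Set.diff_iUnion, Set.inter_iInter]
    have hzero : μH[1] (T ∩ (S \ ⋃ N, SN N)) = 0 :=
      measure_mono_null Set.inter_subset_right hnull
    have htend : Tendsto (fun N => μH[1] (T ∩ (S \ SN N))) atTop (𝓝 0) := by
      have := tendsto_measure_iInter_atTop (μ := μH[1])
        (s := fun N => T ∩ (S \ SN N))
        (fun N => (hTm.inter (hS.diff (hclosed N).measurableSet)).nullMeasurableSet)
        (fun N M hNM => Set.inter_subset_inter_right T
          (Set.diff_subset_diff_right (hmono hNM)))
        ⟨0, fun h => hTfin (top_le_iff.1 (h ▸ measure_mono Set.inter_subset_left))⟩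
      rw [hiInter, hzero] at this
      exact this
    have htend' : Tendsto (fun N => a * μH[1] (T ∩ (S \ SN N))) atTop (𝓝 0) := by
      have := ENNReal.Tendsto.const_mul (a := a) htend (Or.inr ha)
      rwa [mul_zero] at this
    have hev : ∀ᶠ N in atTop, a * μH[1] (T ∩ (S \ SN N)) < ε / 2 :=
      htend'.eventually_lt_const (ENNReal.half_pos hε.ne')
    filter_upwards [hev] with N hN
    constructor
    · exact le_trans (tsub_le_self.trans (hlow N)) le_rfl
    · -- upper bound
      have h1 : hausUrbanDist (cube n) (SN N) a b x y ≤
          (∫⁻ z in T ∩ SN N, b z ∂μH[1]) + a * μH[1] (T \ SN N) :=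
        iInf₂_le γ hγ
      have h2 := cost_le_cost_add (μ := μH[1]) (b := b) (a := a)
        hTm (hclosed N).measurableSet hS (hsub N)
      calc hausUrbanDist (cube n) (SN N) a b x y
          ≤ ((∫⁻ z in T ∩ S, b z ∂μH[1]) + a * μH[1] (T \ S)) + a * μH[1] (T ∩ (S \ SN N)) :=
            h1.trans h2
        _ ≤ (hausUrbanDist (cube n) S a b x y + ε / 2) + ε / 2 := by
            exact add_le_add hcost.le hN.le
        _ = hausUrbanDist (cube n) S a b x y + ε := by
            rw [add_assoc, ENNReal.add_halves]
  · -- part 2: truncated frictions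
    intro x hx y hy hd
    rw [ENNReal.tendsto_nhds hd]
    intro ε hε
    -- lower bound: d ≤ d_λ for every λ
    have hlow : ∀ lam : ℝ≥0∞,
        hausUrbanDist (cube n) S a b x y ≤
          hausUrbanDist (cube n) S a (fun z => max lam (b z)) x y := by
      intro lam
      refine iInf₂_mono fun γ hγ => add_le_add ?_ le_rfl
      exact lintegral_mono fun z => le_max_right _ _
    -- pick a near-optimal path
    have hone : hausUrbanDist (cube n) S a b x y < hausUrbanDist (cube n) S a b x y + ε / 2 :=
      ENNReal.lt_add_right hd (ENNReal.half_pos hε.ne').ne'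
    rw [hausUrbanDist] at hone
    simp only [iInf_lt_iff] at hone
    obtain ⟨γ, hγ, hcost⟩ := hone
    set T := γ '' Set.Icc (0 : ℝ) 1 with hT
    have hTm : MeasurableSet T := hTmeas γ hγ.1
    obtain ⟨K, hK⟩ := hγ.1
    have hTfin : μH[1] T ≠ ⊤ := path_image_measure_ne_top hK
    -- λ ↦ λ · μ(T) tends to 0
    have htend : Tendsto (fun lam : ℝ≥0∞ => lam * μH[1] T) (𝓝[>] 0) (𝓝 0) := by
      have : Tendsto (fun lam : ℝ≥0∞ => lam * μH[1] T) (𝓝 0) (𝓝 (0 * μH[1] T)) :=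
        ENNReal.Tendsto.mul_const tendsto_id (Or.inr hTfin)
      rw [zero_mul] at this
      exact this.mono_left nhdsWithin_le_nhds
    have hev : ∀ᶠ lam : ℝ≥0∞ in 𝓝[>] 0, lam * μH[1] T < ε / 2 :=
      htend.eventually_lt_const (ENNReal.half_pos hε.ne')
    filter_upwards [hev] with lam hlam
    constructor
    · exact tsub_le_self.trans (hlow lam)
    · -- upper bound: d_λ ≤ cost_λ(γ) ≤ cost(γ) + λ·μ(T)
      have h1 : hausUrbanDist (cube n) S a (fun z => max lam (b z)) x y ≤
          (∫⁻ z in T ∩ S, max lam (b z) ∂μH[1]) + a * μH[1] (T \ S) :=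
        iInf₂_le γ hγ
      have h2 : (∫⁻ z in T ∩ S, max lam (b z) ∂μH[1]) ≤
          (∫⁻ z in T ∩ S, b z ∂μH[1]) + lam * μH[1] (T ∩ S) := by
        calc (∫⁻ z in T ∩ S, max lam (b z) ∂μH[1])
            ≤ ∫⁻ z in T ∩ S, b z + lam ∂μH[1] :=
              lintegral_mono fun z => max_le (le_add_self) (le_add_right le_rfl)
          _ = (∫⁻ z in T ∩ S, b z ∂μH[1]) + lam * μH[1] (T ∩ S) := by
              rw [lintegral_add_right _ measurable_const, setLIntegral_const]
      have h3 : lam * μH[1] (T ∩ S) ≤ lam * μH[1] T := by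
        gcongr
        exact Set.inter_subset_left
      calc hausUrbanDist (cube n) S a (fun z => max lam (b z)) x y
          ≤ (∫⁻ z in T ∩ S, max lam (b z) ∂μH[1]) + a * μH[1] (T \ S) := h1
        _ ≤ ((∫⁻ z in T ∩ S, b z ∂μH[1]) + lam * μH[1] (T ∩ S)) + a * μH[1] (T \ S) := by
            gcongr
        _ = ((∫⁻ z in T ∩ S, b z ∂μH[1]) + a * μH[1] (T \ S)) + lam * μH[1] (T ∩ S) := by
            ring
        _ ≤ (hausUrbanDist (cube n) S a b x y + ε / 2) + ε / 2 :=
            add_le_add hcost.le (h3.trans hlam.le)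
        _ = hausUrbanDist (cube n) S a b x y + ε := by
            rw [add_assoc, ENNReal.add_halves]
end
end
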